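/- arXiv:1407.4645 — 2 statements merged into one kernel-verified Lean document; each statement's English description precedes it below -/
import Mathlib

section
/- Under perfect-recall semantics, for any coalition A, state formula ψ and path formula Ψ: ⟨⟨A⟩⟩(ψ ∧ ○Ψ) ≡ ψ ∧ ⟨⟨A⟩⟩○⟨⟨A⟩⟩Ψ. -/
/-- A concurrent game model: available actions (nonempty for each agent at each
state) and a deterministic outcome function. -/
structure CGM (Agt St Act : Type*) where
  act : Agt → St → Set Act
  act_nonempty : ∀ a s, (act a s).Nonempty
  out : St → (Agt → Act) → St

/-- A play `lam` starting at `s` is consistent with the perfect-recall collective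
strategy `σ` of coalition `A` if each transition is effected by some available
action profile in which all members of `A` follow `σ` on the history so far. -/
def ConsistentPlay {Agt St Act : Type*} (M : CGM Agt St Act) (s : St) (A : Set Agt)
    (σ : Agt → List St → Act) (lam : ℕ → St) : Prop :=
  lam 0 = s ∧ ∀ n, ∃ prof : Agt → Act,
    (∀ a, prof a ∈ M.act a (lam n)) ∧
    (∀ a ∈ A, prof a = σ a ((List.range (n + 1)).map lam)) ∧
    M.out (lam n) prof = lam (n + 1)

/-- `M, s ⊨ ⟨⟨A⟩⟩Φ` under perfect-recall semantics: some perfect-recall collective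
strategy of `A`, prescribing only available actions, forces every consistent play
from `s` to satisfy the path property `Φ`. -/
def CoopSat {Agt St Act : Type*} (M : CGM Agt St Act) (s : St) (A : Set Agt)
    (Φ : (ℕ → St) → Prop) : Prop :=
  ∃ σ : Agt → List St → Act,
    (∀ a ∈ A, ∀ (h : List St) (hne : h ≠ []), σ a h ∈ M.act a (h.getLast hne)) ∧
    ∀ lam, ConsistentPlay M s A σ lam → Φ lam

/-- Suffix of a play. -/
def shift {St : Type*} (lam : ℕ → St) (k : ℕ) : ℕ → St := fun n => lam (n + k)

/-! A strategy `σ` for `ψ ∧ ○Ψ` witnesses `⟨⟨A⟩⟩Ψ` at every successor `t` through its residual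
`h ↦ σ (s :: h)`, since prepending `s` to a play of the residual yields a play of `σ`. Conversely,
choose a strategy `σ₀` for `○⟨⟨A⟩⟩Ψ` and, at each state `t`, a witness `W t` of `⟨⟨A⟩⟩Ψ`; playing
`σ₀` for one step and `W t` afterwards is a single perfect-recall strategy for `○Ψ`. Since every
agent always has an available action, legal strategies have consistent plays, which gives `ψ s`
and shows that every state reached in one step by `σ₀` is the successor on some `σ₀`-play. -/

section History

variable {α : Type*}

def history (lam : ℕ → α) (n : ℕ) : List α := (List.range (n + 1)).map lam

theorem history_succ (lam : ℕ → α) (n : ℕ) :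
    history lam (n + 1) = history lam n ++ [lam (n + 1)] := by
  simp [history, List.range_succ]

theorem history_succ_eq_cons (lam : ℕ → α) (n : ℕ) :
    history lam (n + 1) = lam 0 :: history (shift lam 1) n := by
  simp only [history, List.range_succ_eq_map, List.map_cons, List.map_map]
  rfl

theorem history_ne_nil (lam : ℕ → α) (n : ℕ) : history lam n ≠ [] := by
  simp [history]

theorem getLast_history (lam : ℕ → α) (n : ℕ) (h : history lam n ≠ []) :
    (history lam n).getLast h = lam n := by
  simp [history, List.getLast_map, List.getLast_range]

theorem getLastD_history (lam : ℕ → α) (n : ℕ) (d : α) : (history lam n).getLastD d = lam n := by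
  cases n with
  | zero => rfl
  | succ n => rw [history_succ, List.getLastD_concat]

theorem exists_seq_eq_next_history (s : α) (next : List α → α) :
    ∃ lam : ℕ → α, lam 0 = s ∧ ∀ n, lam (n + 1) = next (history lam n) := by
  let extend : List α → List α := fun h => h ++ [next h]
  let lam : ℕ → α := fun n => (extend^[n] [s]).getLastD s
  have lam_succ : ∀ n, lam (n + 1) = next (extend^[n] [s]) := fun n => by
    simp only [lam, Function.iterate_succ_apply', extend, List.getLastD_concat]
  have history_lam : ∀ n, history lam n = extend^[n] [s] := fun n => by
    induction n with
    | zero => rfl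
    | succ n ih => rw [history_succ, ih, lam_succ, Function.iterate_succ_apply']
  exact ⟨lam, rfl, fun n => by rw [lam_succ, history_lam]⟩

end History

namespace CGM

variable {Agt St Act : Type*} (M : CGM Agt St Act) (A : Set Agt)

def IsLegal (σ : Agt → List St → Act) : Prop :=
  ∀ a ∈ A, ∀ (h : List St) (hne : h ≠ []), σ a h ∈ M.act a (h.getLast hne)

def IsConsistentStep (σ : Agt → List St → Act) (h : List St) (x y : St) : Prop :=
  ∃ prof : Agt → Act, (∀ a, prof a ∈ M.act a x) ∧ (∀ a ∈ A, prof a = σ a h) ∧ M.out x prof = y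

end CGM

def residualStrategy {Agt St Act : Type*} (σ : Agt → List St → Act) (x : St) :
    Agt → List St → Act :=
  fun a h => σ a (x :: h)

section Plays

variable {Agt St Act : Type*} {M : CGM Agt St Act} {A : Set Agt} {σ : Agt → List St → Act}
  {s : St} {lam : ℕ → St}

theorem CGM.IsLegal.residualStrategy (hσ : M.IsLegal A σ) (x : St) :
    M.IsLegal A (residualStrategy σ x) := fun a ha h hne => by
  simpa only [_root_.residualStrategy, List.getLast_cons hne] using
    hσ a ha (x :: h) (List.cons_ne_nil x h)

theorem consistentPlay_iff_forall_isConsistentStep :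
    ConsistentPlay M s A σ lam ↔
      lam 0 = s ∧ ∀ n, M.IsConsistentStep A σ (history lam n) (lam n) (lam (n + 1)) :=
  Iff.rfl

theorem isConsistentStep_residualStrategy {h : List St} {x y z : St} :
    M.IsConsistentStep A (residualStrategy σ x) h y z ↔ M.IsConsistentStep A σ (x :: h) y z :=
  Iff.rfl

theorem consistentPlay_iff_step_and_shift :
    ConsistentPlay M s A σ lam ↔
      lam 0 = s ∧ M.IsConsistentStep A σ [s] s (lam 1) ∧
        ConsistentPlay M (lam 1) A (residualStrategy σ s) (shift lam 1) := by
  simp only [consistentPlay_iff_forall_isConsistentStep]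
  constructor
  · rintro ⟨rfl, hstep⟩
    refine ⟨rfl, hstep 0, rfl, fun n => ?_⟩
    rw [isConsistentStep_residualStrategy, ← history_succ_eq_cons]
    exact hstep (n + 1)
  · rintro ⟨rfl, hstep₀, -, hstep⟩
    refine ⟨rfl, fun n => ?_⟩
    cases n with
    | zero => exact hstep₀
    | succ n =>
      rw [history_succ_eq_cons, ← isConsistentStep_residualStrategy]
      exact hstep n

theorem consistentPlay_congr {σ' : Agt → List St → Act}
    (hσ : ∀ a ∈ A, ∀ h, σ a (s :: h) = σ' a (s :: h)) :
    ConsistentPlay M s A σ lam ↔ ConsistentPlay M s A σ' lam := by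
  simp only [consistentPlay_iff_forall_isConsistentStep, CGM.IsConsistentStep]
  refine and_congr_right fun h0 => forall_congr' fun n => exists_congr fun prof =>
    and_congr_right fun _ => and_congr_left fun _ => forall₂_congr fun a ha => ?_
  cases n with
  | zero => rw [history, List.range_one, List.map_singleton, h0, hσ a ha]
  | succ n => rw [history_succ_eq_cons, h0, hσ a ha]

theorem exists_consistentPlay (hσ : M.IsLegal A σ) (s : St) :
    ∃ lam, ConsistentPlay M s A σ lam := by
  classical
  let prof : List St → Agt → Act := fun h a =>
    if a ∈ A then σ a h else (M.act_nonempty a (h.getLastD s)).some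
  obtain ⟨lam, h0, hnext⟩ :=
    exists_seq_eq_next_history s fun h => M.out (h.getLastD s) (prof h)
  refine ⟨lam, h0, fun n => ⟨prof (history lam n), fun a => ?_, fun a ha => if_pos ha, ?_⟩⟩
  · by_cases ha : a ∈ A
    · simpa only [prof, if_pos ha, getLast_history] using hσ a ha _ (history_ne_nil lam n)
    · simpa only [prof, if_neg ha, getLastD_history] using (M.act_nonempty a (lam n)).some_mem
  · rw [hnext, getLastD_history]

theorem ConsistentPlay.cons {t : St} {μ : ℕ → St} (hstep : M.IsConsistentStep A σ [s] s t)
    (hμ : ConsistentPlay M t A (residualStrategy σ s) μ) :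
    ConsistentPlay M s A σ (Stream'.cons s μ) := by
  obtain rfl := hμ.1
  exact consistentPlay_iff_step_and_shift.2 ⟨rfl, hstep, hμ⟩

theorem exists_consistentPlay_of_isConsistentStep (hσ : M.IsLegal A σ) {t : St}
    (hstep : M.IsConsistentStep A σ [s] s t) :
    ∃ lam, ConsistentPlay M s A σ lam ∧ lam 1 = t := by
  obtain ⟨μ, hμ⟩ := exists_consistentPlay (hσ.residualStrategy s) t
  exact ⟨Stream'.cons s μ, hμ.cons hstep, hμ.1⟩

end Plays

/-- `W t` is handed the history cut to begin at `t`, so that a play of the composition,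
shifted by one, is a play of `W t`. -/
def composeStrategy {Agt St Act : Type*} (σ₀ : Agt → List St → Act)
    (W : St → Agt → List St → Act) : Agt → List St → Act :=
  fun a h => match h with
  | _ :: t :: r => W t a (t :: r)
  | h => σ₀ a h

section CoopSat

variable {Agt St Act : Type*} {M : CGM Agt St Act} {A : Set Agt} {s : St}

theorem CGM.IsLegal.composeStrategy {σ₀ : Agt → List St → Act}
    {W : St → Agt → List St → Act} (h₀ : M.IsLegal A σ₀) (hW : ∀ t, M.IsLegal A (W t)) :
    M.IsLegal A (composeStrategy σ₀ W)
  | _, _, [], hne => absurd rfl hne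
  | a, ha, [x], _ => h₀ a ha [x] (List.cons_ne_nil x [])
  | a, ha, _ :: t :: r, _ => by
    simpa only [_root_.composeStrategy, List.getLast_cons_cons] using
      hW t a ha (t :: r) (List.cons_ne_nil t r)

theorem coopSat_initial_and_iff (ψ : St → Prop) (Φ : (ℕ → St) → Prop) :
    CoopSat M s A (fun lam => ψ (lam 0) ∧ Φ lam) ↔ ψ s ∧ CoopSat M s A Φ := by
  constructor
  · rintro ⟨σ, hσ, hforce⟩
    obtain ⟨lam, hlam⟩ := exists_consistentPlay hσ s
    exact ⟨hlam.1 ▸ (hforce lam hlam).1, σ, hσ, fun lam hlam => (hforce lam hlam).2⟩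
  · rintro ⟨hψ, σ, hσ, hforce⟩
    exact ⟨σ, hσ, fun lam hlam => ⟨hlam.1 ▸ hψ, hforce lam hlam⟩⟩

theorem coopSat_next_coopSat_of_coopSat_shift {Ψ : (ℕ → St) → Prop}
    (h : CoopSat M s A (fun lam => Ψ (shift lam 1))) :
    CoopSat M s A (fun lam => CoopSat M (lam 1) A Ψ) := by
  obtain ⟨σ, hσ : M.IsLegal A σ, hforce⟩ := h
  refine ⟨σ, hσ, fun lam hlam => ⟨residualStrategy σ s, hσ.residualStrategy s, fun μ hμ => ?_⟩⟩
  have hstep := (consistentPlay_iff_step_and_shift.1 hlam).2.1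
  exact hforce _ (hμ.cons hstep)

theorem coopSat_shift_of_coopSat_next_coopSat {Ψ : (ℕ → St) → Prop}
    (h : CoopSat M s A (fun lam => CoopSat M (lam 1) A Ψ)) :
    CoopSat M s A (fun lam => Ψ (shift lam 1)) := by
  obtain ⟨σ₀, h₀ : M.IsLegal A σ₀, hforce₀⟩ := h
  have hwitness : ∀ t, ∃ σ, M.IsLegal A σ ∧
      (CoopSat M t A Ψ → ∀ μ, ConsistentPlay M t A σ μ → Ψ μ) := fun t => by
    by_cases ht : CoopSat M t A Ψ
    · obtain ⟨σ, hσ, hforce⟩ := ht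
      exact ⟨σ, hσ, fun _ => hforce⟩
    · exact ⟨σ₀, h₀, fun h => absurd h ht⟩
  choose W hW hWforce using hwitness
  refine ⟨composeStrategy σ₀ W, h₀.composeStrategy hW, fun lam hlam => ?_⟩
  obtain ⟨rfl, hstep, htail⟩ := consistentPlay_iff_step_and_shift.1 hlam
  have hsat : CoopSat M (lam 1) A Ψ := by
    obtain ⟨μ, hμ, hμ1⟩ := exists_consistentPlay_of_isConsistentStep h₀ hstep
    exact hμ1 ▸ hforce₀ μ hμ
  refine hWforce _ hsat _ ((consistentPlay_congr ?_).1 htail)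
  exact fun _ _ _ => rfl

theorem coopSat_shift_iff_coopSat_next_coopSat (Ψ : (ℕ → St) → Prop) :
    CoopSat M s A (fun lam => Ψ (shift lam 1)) ↔
      CoopSat M s A (fun lam => CoopSat M (lam 1) A Ψ) :=
  ⟨coopSat_next_coopSat_of_coopSat_shift, coopSat_shift_of_coopSat_next_coopSat⟩

end CoopSat

/-- under perfect-recall semantics, for any coalition `A`, state
formula `ψ` and path formula `Ψ`:
`⟨⟨A⟩⟩(ψ ∧ ○Ψ) ≡ ψ ∧ ⟨⟨A⟩⟩○⟨⟨A⟩⟩Ψ`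
(where `⟨⟨A⟩⟩○χ` holds at `s` iff `A` can enforce the state formula `χ` at every
immediate successor, i.e. at position 1 of every consistent play). -/
theorem coop_next_compose {Agt St Act : Type*} (M : CGM Agt St Act) (s : St)
    (A : Set Agt) (ψ : St → Prop) (Ψ : (ℕ → St) → Prop) :
    CoopSat M s A (fun lam => ψ (lam 0) ∧ Ψ (shift lam 1)) ↔
      (ψ s ∧ CoopSat M s A (fun lam => CoopSat M (lam 1) A Ψ)) :=
  (coopSat_initial_and_iff ψ _).trans (and_congr_right' (coopSat_shift_iff_coopSat_next_coopSat Ψ))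
end

section
/- Semantic merging lemma: let Θ = {⟨⟨A₁⟩⟩○φ₁, …, ⟨⟨A_m⟩⟩○φ_m, ⟦A'⟧○ψ} with A_i ∩ A_j = ∅ for i ≠ j and A_i ⊆ A' for all i, and suppose M, s ⊨ Θ with witnesses: A_i-actions σ_{A_i} at s enforcing φ_i, and an A'-co-action σᶜ_{A'} at s enforcing ψ. Then there exists a state s' reachable from s by an action profile extending every σ_{A_i} and consistent with σᶜ_{A'}, such that M, s' ⊨ {φ₁,…,φ_m, ψ}. -/
namespace CGM

open Function

variable {Agt St Act : Type*} (M : CGM Agt St Act) (s : St)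

theorem exists_avail_extending_of_pairwise_disjoint {ι : Type*} (A : ι → Set Agt)
    (hdisj : Pairwise (Disjoint on A)) (σ : ι → Agt → Act)
    (hσ : ∀ i, ∀ a ∈ A i, σ i a ∈ M.act a s) :
    ∃ p : Agt → Act, (∀ a, p a ∈ M.act a s) ∧ ∀ i, ∀ a ∈ A i, p a = σ i a := by
  have h : ∀ a, ∃ x ∈ M.act a s, ∀ i, a ∈ A i → x = σ i a := by
    intro a
    by_cases ha : ∃ i, a ∈ A i
    · obtain ⟨i, hai⟩ := ha
      refine ⟨σ i a, hσ i a hai, fun j haj => ?_⟩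
      obtain rfl : i = j := by
        by_contra hij
        exact (hdisj hij).ne_of_mem hai haj rfl
      rfl
    · obtain ⟨x, hx⟩ := M.act_nonempty a s
      exact ⟨x, hx, fun i hai => (ha ⟨i, hai⟩).elim⟩
  choose p hp hext using h
  exact ⟨p, hp, fun i a ha => hext a i ha⟩

theorem exists_avail_completion (A' : Set Agt) (σc : (Agt → Act) → (Agt → Act))
    (hσc_avail : ∀ p, ∀ a ∉ A', σc p a ∈ M.act a s)
    (hσc_dep : ∀ p p', (∀ a ∈ A', p a = p' a) → σc p = σc p')
    (p : Agt → Act) (hp : ∀ a, p a ∈ M.act a s) :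
    ∃ q : Agt → Act, (∀ a, q a ∈ M.act a s) ∧ (∀ a ∈ A', q a = p a) ∧
      ∀ a ∉ A', q a = σc q a := by
  classical
  set q := A'.piecewise p (σc p)
  have hq_mem : ∀ a ∈ A', q a = p a := fun a ha => A'.piecewise_eq_of_mem _ _ ha
  have hq_notMem : ∀ a ∉ A', q a = σc p a := fun a ha => A'.piecewise_eq_of_notMem _ _ ha
  have hσc_q : σc q = σc p := hσc_dep q p hq_mem
  refine ⟨q, fun a => ?_, hq_mem, fun a ha => hσc_q ▸ hq_notMem a ha⟩
  by_cases ha : a ∈ A'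
  · exact hq_mem a ha ▸ hp a
  · exact hq_notMem a ha ▸ hσc_avail p a ha

end CGM

/-- semantic merging lemma: let
`Θ = {⟨⟨A₁⟩⟩○φ₁, …, ⟨⟨A_m⟩⟩○φ_m, ⟦A'⟧○ψ}` with the `A i` pairwise disjoint and all
contained in `A'`, and suppose `M, s ⊨ Θ` with witnessing `A i`-actions `σ i` and
an `A'`-co-action `σc` (which depends only on the `A'`-part of a profile). Then
some available action profile extending every `σ i` and consistent with `σc`
leads from `s` to a state `s'` satisfying all the `φ i` and `ψ`. -/
theorem merge_actions {Agt St Act : Type*} (M : CGM Agt St Act) (s : St)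
    {ι : Type*} (A : ι → Set Agt) (A' : Set Agt)
    (hdisj : ∀ i j, i ≠ j → Disjoint (A i) (A j))
    (hsub : ∀ i, A i ⊆ A')
    (φ : ι → St → Prop) (ψ : St → Prop)
    (σ : ι → Agt → Act)
    (hσ : ∀ i, ∀ a ∈ A i, σ i a ∈ M.act a s)
    (henf : ∀ i, ∀ prof : Agt → Act, (∀ a, prof a ∈ M.act a s) →
      (∀ a ∈ A i, prof a = σ i a) → φ i (M.out s prof))
    (σc : (Agt → Act) → (Agt → Act))
    (hσc_avail : ∀ prof, ∀ a ∉ A', σc prof a ∈ M.act a s)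
    (hσc_dep : ∀ prof prof', (∀ a ∈ A', prof a = prof' a) → σc prof = σc prof')
    (hcoenf : ∀ prof : Agt → Act, (∀ a, prof a ∈ M.act a s) →
      (∀ a ∉ A', prof a = σc prof a) → ψ (M.out s prof)) :
    ∃ prof : Agt → Act,
      (∀ a, prof a ∈ M.act a s) ∧
      (∀ i, ∀ a ∈ A i, prof a = σ i a) ∧
      (∀ a ∉ A', prof a = σc prof a) ∧
      (∀ i, φ i (M.out s prof)) ∧ ψ (M.out s prof) := by
  obtain ⟨p, hp, hpσ⟩ :=
    M.exists_avail_extending_of_pairwise_disjoint s A (fun i j => hdisj i j) σ hσ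
  obtain ⟨q, hq, hqp, hqσc⟩ := M.exists_avail_completion s A' σc hσc_avail hσc_dep p hp
  have hqσ : ∀ i, ∀ a ∈ A i, q a = σ i a := fun i a ha =>
    (hqp a (hsub i ha)).trans (hpσ i a ha)
  exact ⟨q, hq, hqσ, hqσc, fun i => henf i q hq (hqσ i), hcoenf q hq hqσc⟩
end
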